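/- arXiv:2501.18475 — 2 statements merged into one kernel-verified Lean document; each statement's English description precedes it below -/
import Mathlib

section
/- Let X ∈ ℝ^{p×m} have full column rank with H = XᵀX = RᵀR, R invertible. Then for ΔW ∈ ℝ^{m×n}, the optimal value min_{A ∈ ℝ^{m×r}, B ∈ ℝ^{n×r}} ‖X(A Bᵀ − ΔW)‖²_F equals Σ_{i>r} σᵢ(R ΔW)², the sum of squared singular values of R ΔW beyond the r-th. -/
open Matrix

/-- Frobenius norm squared: `‖A‖²_F = Tr(Aᵀ A)`. -/
noncomputable def frobSq {m n : ℕ} (A : Matrix (Fin m) (Fin n) ℝ) : ℝ :=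
  Matrix.trace (Aᵀ * A)

open Finset

/-!
Since `RᵀR = XᵀX`, the loss equals `‖R (A Bᵀ - ΔW)‖²_F`, and multiplying by the orthogonal
factors of the SVD turns it into `‖A' B'ᵀ - S‖²_F` with `A' = Uᵀ R A`, `B' = Vᵀ B` and `S`
diagonal. For the lower bound take `n - r` orthonormal vectors `Q` in `ker B'ᵀ`: projecting
onto them cannot increase the norm and kills `A' B'ᵀ`, so the loss is at least
`‖S Q‖² = ∑ⱼ σⱼ² tⱼ` with weights `tⱼ = (Q Qᵀ)ⱼⱼ ∈ [0, 1]` of total mass `n - r`. Such a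
weighted sum of the decreasing `σⱼ²` is smallest when the mass sits on the last `n - r`
indices. The truncated SVD `A Bᵀ = ΔW V Pᵣ Vᵀ`, with `Pᵣ` the projection onto the first `r`
coordinates, attains the bound.
-/

theorem sum_le_sum_mul_of_card_le {ι : Type*} [Fintype ι] {s : Finset ι} {d t : ι → ℝ} {c : ℝ}
    (hc : 0 ≤ c) (hs : ∀ i ∈ s, d i ≤ c) (hsc : ∀ i ∉ s, c ≤ d i)
    (ht₀ : ∀ i, 0 ≤ t i) (ht₁ : ∀ i, t i ≤ 1) (hcard : (#s : ℝ) ≤ ∑ i, t i) :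
    ∑ i ∈ s, d i ≤ ∑ i, d i * t i := by
  classical
  have hpt : ∀ i, c * (t i - if i ∈ s then 1 else 0) ≤ d i * t i - if i ∈ s then d i else 0 := by
    intro i
    split_ifs with hi
    · nlinarith [hs i hi, ht₁ i]
    · nlinarith [hsc i hi, ht₀ i]
  have hsum := sum_le_sum fun i (_ : i ∈ univ) => hpt i
  rw [← mul_sum, sum_sub_distrib, sum_sub_distrib, sum_ite_mem, sum_ite_mem, univ_inter,
    sum_const, nsmul_one] at hsum
  nlinarith

section Frobenius

variable {m n k : ℕ}

theorem frobSq_nonneg (M : Matrix (Fin m) (Fin n) ℝ) : 0 ≤ frobSq M := by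
  simp only [frobSq, trace, diag_apply, mul_apply, transpose_apply]
  exact sum_nonneg fun _ _ => sum_nonneg fun _ _ => mul_self_nonneg _

theorem frobSq_mul_eq_trace (N : Matrix (Fin m) (Fin n) ℝ) (P : Matrix (Fin n) (Fin k) ℝ) :
    frobSq (N * P) = trace (Nᵀ * N * (P * Pᵀ)) := by
  rw [frobSq, transpose_mul, Matrix.mul_assoc, trace_mul_comm, ← Matrix.mul_assoc,
    ← Matrix.mul_assoc, Matrix.mul_assoc]

theorem frobSq_mul_of_transpose_mul_eq {p : ℕ} {X : Matrix (Fin p) (Fin m) ℝ}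
    {R : Matrix (Fin m) (Fin m) ℝ} (hRX : Rᵀ * R = Xᵀ * X) (N : Matrix (Fin m) (Fin n) ℝ) :
    frobSq (X * N) = frobSq (R * N) := by
  rw [frobSq, frobSq, transpose_mul, transpose_mul, Matrix.mul_assoc, Matrix.mul_assoc,
    ← Matrix.mul_assoc Xᵀ, ← Matrix.mul_assoc Rᵀ, hRX]

theorem frobSq_mul_mul_transpose {p : ℕ} {U : Matrix (Fin k) (Fin m) ℝ}
    {V : Matrix (Fin p) (Fin n) ℝ}
    (hU : Uᵀ * U = 1) (hV : Vᵀ * V = 1) (N : Matrix (Fin m) (Fin n) ℝ) :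
    frobSq (U * N * Vᵀ) = frobSq N := by
  rw [frobSq_mul_eq_trace, transpose_mul, Matrix.mul_assoc Nᵀ, ← Matrix.mul_assoc Uᵀ, hU,
    Matrix.one_mul, transpose_transpose, trace_mul_cycle, hV, Matrix.one_mul,
    frobSq]

theorem frobSq_mul_le {Q : Matrix (Fin n) (Fin k) ℝ} (hQ : Qᵀ * Q = 1)
    (M : Matrix (Fin m) (Fin n) ℝ) :
    frobSq (M * Q) ≤ frobSq M := by
  set K := Q * Qᵀ
  have hK : K * K = K := by
    rw [Matrix.mul_assoc, ← Matrix.mul_assoc Qᵀ, hQ, Matrix.one_mul]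
  have hKt : Kᵀ = K := by rw [transpose_mul, transpose_transpose]
  have hcompl : (1 - K) * (1 - K)ᵀ = 1 - K := by
    rw [transpose_sub, transpose_one, hKt, Matrix.sub_mul, Matrix.mul_sub, Matrix.mul_sub, hK]
    simp
  have hsplit : frobSq M = frobSq (M * Q) + frobSq (M * (1 - K)) := by
    rw [frobSq_mul_eq_trace, frobSq_mul_eq_trace, hcompl, ← trace_add, ← Matrix.mul_add,
      add_sub_cancel, Matrix.mul_one, frobSq]
  linarith [frobSq_nonneg (M * (1 - K))]

end Frobenius

theorem Fin.card_filter_le_val (n r : ℕ) : #{j : Fin n | r ≤ (j : ℕ)} = n - r := by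
  have h := card_filter_add_card_filter_not (s := univ) (p := fun j : Fin n => (j : ℕ) < r)
  simp only [not_lt, card_univ, Fintype.card_fin, Fin.card_filter_val_lt] at h
  omega

theorem exists_orthonormal_columns_transpose_mul_eq_zero {n r : ℕ}
    (B : Matrix (Fin n) (Fin r) ℝ) :
    ∃ Q : Matrix (Fin n) (Fin (n - r)) ℝ, Qᵀ * Q = 1 ∧ Bᵀ * Q = 0 := by
  set L := toEuclideanLin Bᵀ
  have hdim : n - r ≤ Module.finrank ℝ (LinearMap.ker L) := by
    have h := L.finrank_range_add_finrank_ker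
    have := (LinearMap.range L).finrank_le
    simp only [finrank_euclideanSpace_fin] at h this
    omega
  set b := stdOrthonormalBasis ℝ (LinearMap.ker L)
  set f : Fin (n - r) → EuclideanSpace ℝ (Fin n) := fun k => b (Fin.castLE hdim k)
  refine ⟨of fun i k => f k i, ?_, ?_⟩
  · ext k l
    have h := orthonormal_iff_ite.mp b.orthonormal (Fin.castLE hdim k) (Fin.castLE hdim l)
    rw [Submodule.coe_inner, EuclideanSpace.inner_eq_star_dotProduct, star_trivial,
      dotProduct_comm] at h
    simp only [Fin.castLE_inj] at h
    rw [one_apply]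
    exact h
  · ext c k
    have h : L (f k) = 0 := (b (Fin.castLE hdim k)).2
    have := congr_arg (fun v => v.ofLp c) h
    simp only [L, toLpLin_apply, mulVec] at this
    exact this

theorem sum_fin_filter_le_ite_lt {M : Type*} [AddCommMonoid M] (m n r : ℕ) (f : ℕ → M) :
    ∑ j : Fin n with r ≤ j.val, (if (j : ℕ) < m then f j else 0) =
      ∑ i ∈ Ico r (min m n), f i := by
  rw [sum_filter,
    Fin.sum_univ_eq_sum_range (fun j => if r ≤ j then if j < m then f j else 0 else 0),
    ← sum_filter, ← sum_filter]
  congr 1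
  ext i
  simp only [mem_filter, mem_range, mem_Ico, lt_min_iff]
  omega

theorem transpose_mul_self_of_eq_ite {m n : ℕ} {σ : ℕ → ℝ} {S : Matrix (Fin m) (Fin n) ℝ}
    (hS : ∀ i j, S i j = if (i : ℕ) = (j : ℕ) then σ i else 0) :
    Sᵀ * S = diagonal fun j : Fin n => if (j : ℕ) < m then σ j ^ 2 else 0 := by
  ext j l
  rw [mul_apply, diagonal_apply]
  simp only [transpose_apply, hS]
  rw [Fin.sum_univ_eq_sum_range
    (fun x => (if x = (j : ℕ) then σ x else 0) * if x = (l : ℕ) then σ x else 0)]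
  simp only [ite_mul, zero_mul, sum_ite_eq', mem_range, ← Fin.val_inj]
  split_ifs <;> simp_all [sq]

theorem diag_mul_transpose_mem_Icc {ι κ : Type*} [Fintype ι] [Fintype κ] [DecidableEq κ]
    {Q : Matrix ι κ ℝ} (hQ : Qᵀ * Q = 1) (j : ι) : (Q * Qᵀ) j j ∈ Set.Icc 0 1 := by
  have hsq : ∀ K : Matrix ι ι ℝ, Kᵀ = K → (K * K) j j = ∑ l, K j l ^ 2 := fun K hK => by
    rw [mul_apply]
    refine sum_congr rfl fun l _ => ?_
    rw [sq, ← transpose_apply K l j, hK]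
  have hK : Q * Qᵀ * (Q * Qᵀ) = Q * Qᵀ := by
    rw [Matrix.mul_assoc, ← Matrix.mul_assoc Qᵀ, hQ, Matrix.one_mul]
  have h₀ : 0 ≤ (Q * Qᵀ) j j := by
    rw [mul_apply]
    exact sum_nonneg fun _ _ => mul_self_nonneg _
  have h₁ : (Q * Qᵀ) j j ^ 2 ≤ (Q * Qᵀ) j j := by
    conv_rhs => rw [← hK, hsq _ (by rw [transpose_mul, transpose_transpose])]
    exact single_le_sum (f := fun l => (Q * Qᵀ) j l ^ 2) (fun _ _ => sq_nonneg _) (mem_univ j)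
  exact ⟨h₀, by nlinarith⟩

theorem sum_Ico_sq_le_frobSq_mul_transpose_sub {m n r : ℕ} {σ : ℕ → ℝ} (hσ₀ : ∀ i, 0 ≤ σ i)
    (hσ : Antitone σ) {S : Matrix (Fin m) (Fin n) ℝ}
    (hS : ∀ i j, S i j = if (i : ℕ) = (j : ℕ) then σ i else 0)
    (A : Matrix (Fin m) (Fin r) ℝ) (B : Matrix (Fin n) (Fin r) ℝ) :
    ∑ i ∈ Ico r (min m n), σ i ^ 2 ≤ frobSq (A * Bᵀ - S) := by
  set w : ℕ → ℝ := fun j => if j < m then σ j ^ 2 else 0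
  have hw₀ : ∀ j, 0 ≤ w j := fun j => by
    simp only [w]
    split_ifs
    exacts [sq_nonneg _, le_rfl]
  have hw : Antitone w := fun i j hij => by
    simp only [w]
    split_ifs
    · exact pow_le_pow_left₀ (hσ₀ j) (hσ hij) 2
    · omega
    · exact sq_nonneg _
    · exact le_rfl
  obtain ⟨Q, hQ, hBQ⟩ := exists_orthonormal_columns_transpose_mul_eq_zero B
  have htrace : trace (Q * Qᵀ) = ((n - r : ℕ) : ℝ) := by
    rw [trace_mul_comm, hQ, trace_one, Fintype.card_fin]
  calc ∑ i ∈ Ico r (min m n), σ i ^ 2 = ∑ j : Fin n with r ≤ j.val, w j :=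
        (sum_fin_filter_le_ite_lt m n r _).symm
    _ ≤ ∑ j : Fin n, w j * (Q * Qᵀ) j j := by
        refine sum_le_sum_mul_of_card_le (hw₀ r) (fun j hj => hw (mem_filter.mp hj).2)
          (fun j hj => hw (not_le.mp fun h => hj (mem_filter.mpr ⟨mem_univ j, h⟩)).le)
          (fun j => (diag_mul_transpose_mem_Icc hQ j).1)
          (fun j => (diag_mul_transpose_mem_Icc hQ j).2) ?_
        rw [Fin.card_filter_le_val]
        exact htrace.ge
    _ = frobSq (S * Q) := by
        rw [frobSq_mul_eq_trace, transpose_mul_self_of_eq_ite hS]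
        simp only [trace, diag_apply, diagonal_mul]
        rfl
    _ = frobSq ((A * Bᵀ - S) * Q) := by
        rw [Matrix.sub_mul, Matrix.mul_assoc, hBQ, Matrix.mul_zero, zero_sub]
        simp [frobSq]
    _ ≤ frobSq (A * Bᵀ - S) := frobSq_mul_le hQ _

def rectOne (n r : ℕ) : Matrix (Fin n) (Fin r) ℝ :=
  of fun j k => if (j : ℕ) = k then 1 else 0

theorem rectOne_mul_transpose (n r : ℕ) :
    rectOne n r * (rectOne n r)ᵀ = diagonal fun j : Fin n => if (j : ℕ) < r then 1 else 0 := by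
  ext j l
  rw [mul_apply, diagonal_apply]
  simp only [rectOne, transpose_apply, of_apply]
  rw [Fin.sum_univ_eq_sum_range
    (fun x => (if (j : ℕ) = x then (1 : ℝ) else 0) * if (l : ℕ) = x then 1 else 0)]
  simp only [ite_mul, zero_mul, one_mul, sum_ite_eq, mem_range]
  split_ifs <;> simp_all [Fin.ext_iff]

theorem frobSq_mul_rectOne_mul_transpose_sub {m n r : ℕ} {σ : ℕ → ℝ}
    {S : Matrix (Fin m) (Fin n) ℝ} (hS : ∀ i j, S i j = if (i : ℕ) = (j : ℕ) then σ i else 0) :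
    frobSq (S * rectOne n r * (rectOne n r)ᵀ - S) = ∑ i ∈ Ico r (min m n), σ i ^ 2 := by
  have hsub : ∀ D : Matrix (Fin n) (Fin n) ℝ, S * D - S = S * (D - 1) := fun D => by
    rw [Matrix.mul_sub, Matrix.mul_one]
  rw [Matrix.mul_assoc, rectOne_mul_transpose, hsub, frobSq_mul_eq_trace,
    transpose_mul_self_of_eq_ite hS, ← diagonal_one, diagonal_sub, diagonal_transpose,
    diagonal_mul_diagonal, diagonal_mul_diagonal,
    trace_diagonal, ← sum_fin_filter_le_ite_lt m n r, sum_filter]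
  refine sum_congr rfl fun j _ => ?_
  split_ifs <;> first | omega | ring

theorem stmt15_general {p m n r : ℕ}
    (X : Matrix (Fin p) (Fin m) ℝ)
    (R : Matrix (Fin m) (Fin m) ℝ) (hH : Rᵀ * R = Xᵀ * X)
    (ΔW : Matrix (Fin m) (Fin n) ℝ)
    (U : Matrix (Fin m) (Fin m) ℝ) (V : Matrix (Fin n) (Fin n) ℝ)
    (σ : ℕ → ℝ)
    (hU₁ : Uᵀ * U = 1)
    (hV₁ : Vᵀ * V = 1)
    (hσnn : ∀ i, 0 ≤ σ i) (hσmono : ∀ i j, i ≤ j → σ j ≤ σ i)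
    (S : Matrix (Fin m) (Fin n) ℝ)
    (hS : ∀ i j, S i j = if (i : ℕ) = (j : ℕ) then σ (i : ℕ) else 0)
    (hSVD : R * ΔW = U * S * Vᵀ) :
    IsLeast
      {v : ℝ | ∃ (A : Matrix (Fin m) (Fin r) ℝ) (B : Matrix (Fin n) (Fin r) ℝ),
        v = frobSq (X * (A * Bᵀ - ΔW))}
      (∑ i ∈ Finset.Ico r (min m n), σ i ^ 2) := by
  have hU₂ : U * Uᵀ = 1 := mul_eq_one_comm.mp hU₁
  have hV₂ : V * Vᵀ = 1 := mul_eq_one_comm.mp hV₁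
  have hreduce : ∀ (A : Matrix (Fin m) (Fin r) ℝ) (B : Matrix (Fin n) (Fin r) ℝ),
      frobSq (X * (A * Bᵀ - ΔW)) = frobSq ((Uᵀ * R * A) * (Vᵀ * B)ᵀ - S) := by
    intro A B
    rw [frobSq_mul_of_transpose_mul_eq hH, ← frobSq_mul_mul_transpose hU₁ hV₁ (_ - S)]
    congr 1
    rw [Matrix.mul_sub, Matrix.mul_sub, Matrix.sub_mul, hSVD, transpose_mul, transpose_transpose]
    simp only [Matrix.mul_assoc, hV₂, Matrix.mul_one]
    rw [← Matrix.mul_assoc U Uᵀ, hU₂, Matrix.one_mul]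
  refine ⟨⟨ΔW * V * rectOne n r, V * rectOne n r, ?_⟩, ?_⟩
  · have hA : Uᵀ * R * (ΔW * V * rectOne n r) = S * rectOne n r := by
      rw [Matrix.mul_assoc Uᵀ, ← Matrix.mul_assoc R, ← Matrix.mul_assoc R, hSVD]
      simp only [Matrix.mul_assoc, hV₁, ← Matrix.mul_assoc Uᵀ U, hU₁, Matrix.one_mul,
        Matrix.mul_one]
    rw [hreduce, hA, ← Matrix.mul_assoc, hV₁, Matrix.one_mul,
      frobSq_mul_rectOne_mul_transpose_sub hS]
  · rintro _ ⟨A, B, rfl⟩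
    rw [hreduce]
    exact sum_Ico_sq_le_frobSq_mul_transpose_sub hσnn (fun i j => hσmono i j) hS _ _

/-- With `RᵀR = XᵀX` for full-column-rank `X` and singular values
`σ₀ ≥ σ₁ ≥ …` of `R ΔW` (given via an SVD `R ΔW = U Σ Vᵀ`), the optimal value
`min_{A, B} ‖X(A Bᵀ − ΔW)‖²_F` equals `Σ_{i ≥ r} σᵢ²`. -/
theorem stmt15 {p m n r : ℕ}
    (X : Matrix (Fin p) (Fin m) ℝ) (hX : X.rank = m)
    (R : Matrix (Fin m) (Fin m) ℝ) (hR : IsUnit R) (hH : Rᵀ * R = Xᵀ * X)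
    (ΔW : Matrix (Fin m) (Fin n) ℝ)
    (U : Matrix (Fin m) (Fin m) ℝ) (V : Matrix (Fin n) (Fin n) ℝ)
    (σ : ℕ → ℝ)
    (hU₁ : Uᵀ * U = 1) (hU₂ : U * Uᵀ = 1)
    (hV₁ : Vᵀ * V = 1) (hV₂ : V * Vᵀ = 1)
    (hσnn : ∀ i, 0 ≤ σ i) (hσmono : ∀ i j, i ≤ j → σ j ≤ σ i)
    (S : Matrix (Fin m) (Fin n) ℝ)
    (hS : ∀ i j, S i j = if (i : ℕ) = (j : ℕ) then σ (i : ℕ) else 0)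
    (hSVD : R * ΔW = U * S * Vᵀ) :
    IsLeast
      {v : ℝ | ∃ (A : Matrix (Fin m) (Fin r) ℝ) (B : Matrix (Fin n) (Fin r) ℝ),
        v = frobSq (X * (A * Bᵀ - ΔW))}
      (∑ i ∈ Finset.Ico r (min m n), σ i ^ 2) :=
  stmt15_general X R hH ΔW U V σ hU₁ hV₁ hσnn hσmono S hS hSVD
end

section
/- Let X ∈ ℝ^{p×m} (possibly rank-deficient) with H = XᵀX = RᵀR. If A Bᵀ satisfies R A Bᵀ = LR_r(R ΔW), then (A, B) minimizes ‖X(A Bᵀ − ΔW)‖²_F over A ∈ ℝ^{m×r}, B ∈ ℝ^{n×r}, provided LR_r(R ΔW) lies in the range of the map Z ↦ R Z restricted to rank-≤r matrices. -/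
open Matrix

lemma frobSq_eq {p m n : ℕ} (X : Matrix (Fin p) (Fin m) ℝ)
    (R : Matrix (Fin m) (Fin m) ℝ) (hH : Rᵀ * R = Xᵀ * X)
    (M : Matrix (Fin m) (Fin n) ℝ) :
    frobSq (X * M) = frobSq (R * M) := by
  unfold frobSq
  rw [Matrix.transpose_mul, Matrix.transpose_mul, Matrix.mul_assoc, Matrix.mul_assoc,
    ← Matrix.mul_assoc Xᵀ X M, ← Matrix.mul_assoc Rᵀ R M, hH]

/-- Rank-deficient extension: with `H = XᵀX = RᵀR` (`X` possibly rank
deficient), if `Zstar` is a best rank-`r` approximation of `R ΔW` and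
`R A Bᵀ = Zstar` (so `Zstar` lies in the range of `Z ↦ R Z` restricted to
rank-`≤ r` matrices), then `(A, B)` minimizes `‖X(A Bᵀ − ΔW)‖²_F`. -/
theorem stmt17 {p m n r : ℕ} (X : Matrix (Fin p) (Fin m) ℝ)
    (R : Matrix (Fin m) (Fin m) ℝ) (hH : Rᵀ * R = Xᵀ * X)
    (ΔW Zstar : Matrix (Fin m) (Fin n) ℝ)
    (hZrank : Zstar.rank ≤ r)
    (hZbest : ∀ Z : Matrix (Fin m) (Fin n) ℝ, Z.rank ≤ r →
        frobSq (Zstar - R * ΔW) ≤ frobSq (Z - R * ΔW))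
    (A : Matrix (Fin m) (Fin r) ℝ) (B : Matrix (Fin n) (Fin r) ℝ)
    (hAB : R * (A * Bᵀ) = Zstar) :
    ∀ (A' : Matrix (Fin m) (Fin r) ℝ) (B' : Matrix (Fin n) (Fin r) ℝ),
      frobSq (X * (A * Bᵀ - ΔW)) ≤ frobSq (X * (A' * B'ᵀ - ΔW)) := by
  intro A' B'
  rw [frobSq_eq X R hH, frobSq_eq X R hH, Matrix.mul_sub, Matrix.mul_sub, hAB]
  apply hZbest
  calc (R * (A' * B'ᵀ)).rank ≤ ((R * A') * B'ᵀ).rank := by rw [Matrix.mul_assoc]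
    _ ≤ (R * A').rank := Matrix.rank_mul_le_left _ _
    _ ≤ A'.rank := Matrix.rank_mul_le_right _ _
    _ ≤ Fintype.card (Fin r) := Matrix.rank_le_card_width A'
    _ = r := Fintype.card_fin r
end
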